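/- Let n ≥ 1 and let Δ ⊂ ℝⁿ be a convex body with nonempty interior. Set σ := min_{x ∈ Δ} p₁(x), S₀ := max_{x ∈ Δ} p₁(x), and let ι denote the affine dimension of the top slice Δ ∩ p₁⁻¹(S₀). Then there exists a constant C > 0 such that for every integer k ≥ 1 and every s ∈ [(σ + S₀)/2, S₀] with k·(S₀ − s) ≥ C, one has #(Δ ∩ {x ∈ ℝⁿ : p₁(x) > s} ∩ ℤⁿ/k) ≥ C⁻¹·(S₀ − s)^{n−ι}·kⁿ. -/

import Mathlib

/-! The top slice `F` of `Δ` has affine dimension `ι`, so for every `ρ > 0` it contains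
`≳ ρ^{-ι}` points that are `3ρ`-separated. Fix a ball `closedBall p r ⊆ Δ` and push `F` towards
`p` by the homothety `x ↦ (1 - t) x + t p` with `t ≍ S₀ - s`: by convexity the balls of radius
`ρ = t r` around the images of these points lie in `Δ`, above the level `s`, and are pairwise
disjoint. Once `k ρ ≥ n` each of them contains `≳ (k ρ)ⁿ` points of `ℤⁿ/k`, which gives
`≳ ρ^{-ι} (k ρ)ⁿ ≍ (S₀ - s)^{n-ι} kⁿ` lattice points in the slab. -/

open Set

/-- The rescaled lattice `ℤⁿ/k` inside `ℝⁿ`. -/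
def lpts (n k : ℕ) : Set (EuclideanSpace ℝ (Fin n)) :=
  {x | ∀ i, ∃ m : ℤ, (k : ℝ) * x i = (m : ℝ)}

open Metric

section Lattice

variable {n k : ℕ}

noncomputable def latticePoint (k : ℕ) (a : Fin n → ℤ) : EuclideanSpace ℝ (Fin n) :=
  WithLp.toLp 2 fun i => (a i : ℝ) / k

@[simp]
lemma latticePoint_apply (a : Fin n → ℤ) (i : Fin n) : latticePoint k a i = (a i : ℝ) / k :=
  rfl

lemma latticePoint_injective (hk : k ≠ 0) : Function.Injective (latticePoint (n := n) k) := by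
  intro a b hab
  funext i
  have := congrArg (· i) hab
  simp only [latticePoint_apply] at this
  exact_mod_cast (div_left_inj' (Nat.cast_ne_zero.mpr hk)).mp this

lemma lpts_eq_range (hk : k ≠ 0) : lpts n k = range (latticePoint k) := by
  have hk' : (k : ℝ) ≠ 0 := Nat.cast_ne_zero.mpr hk
  ext x
  constructor
  · intro hx
    choose a ha using hx
    refine ⟨a, WithLp.ofLp_injective 2 (funext fun i => ?_)⟩
    simp only [latticePoint, ← ha, mul_div_cancel_left₀ _ hk']
  · rintro ⟨a, rfl⟩ i
    exact ⟨a i, by simp [mul_div_cancel₀ _ hk']⟩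

lemma finite_inter_lpts (hk : k ≠ 0) {s : Set (EuclideanSpace ℝ (Fin n))}
    (hs : Bornology.IsBounded s) : (s ∩ lpts n k).Finite := by
  obtain ⟨R, hR⟩ := hs.subset_closedBall 0
  have hk' : (0 : ℝ) < k := by positivity
  refine ((Set.finite_Icc (-fun _ => ⌈k * R⌉) fun _ => ⌈k * R⌉).image
    (latticePoint (n := n) k)).subset ?_
  rintro x ⟨hxs, hx⟩
  obtain ⟨a, rfl⟩ := (lpts_eq_range hk).subset hx
  have ha : ∀ i, |(a i : ℝ)| ≤ ⌈k * R⌉ := fun i => by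
    have := (PiLp.norm_apply_le (latticePoint k a) i).trans (mem_closedBall_zero_iff.mp (hR hxs))
    rw [latticePoint_apply, Real.norm_eq_abs, abs_div, Nat.abs_cast, div_le_iff₀ hk',
      mul_comm] at this
    exact this.trans (Int.le_ceil _)
  exact ⟨a, ⟨fun i => by exact_mod_cast (abs_le.mp (ha i)).1,
    fun i => by exact_mod_cast (abs_le.mp (ha i)).2⟩, rfl⟩

lemma EuclideanSpace.norm_le_card_mul_of_forall_abs_le {x : EuclideanSpace ℝ (Fin n)} {δ : ℝ}
    (h : ∀ i, |x i| ≤ δ) : ‖x‖ ≤ n * δ := by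
  rcases Nat.eq_zero_or_pos n with rfl | hn
  · simp [Subsingleton.elim x 0]
  have hδ : 0 ≤ δ := (abs_nonneg _).trans (h ⟨0, hn⟩)
  refine (pow_le_pow_iff_left₀ (norm_nonneg x) (by positivity) two_ne_zero).mp ?_
  have hn' : (n : ℝ) ≤ n ^ 2 := by
    exact_mod_cast Nat.le_self_pow two_ne_zero n
  calc ‖x‖ ^ 2 = ∑ i, |x i| ^ 2 := by simp [EuclideanSpace.norm_sq_eq]
    _ ≤ ∑ _i : Fin n, δ ^ 2 := Finset.sum_le_sum fun i _ => pow_le_pow_left₀ (abs_nonneg _) (h i) 2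
    _ = n * δ ^ 2 := by simp
    _ ≤ (n * δ) ^ 2 := by rw [mul_pow]; gcongr

lemma sub_sub_one_le_card_Icc_ceil_floor (a b : ℝ) : b - a - 1 ≤ (Finset.Icc ⌈a⌉ ⌊b⌋).card := by
  rw [Int.card_Icc]
  calc b - a - 1 ≤ ((⌊b⌋ + 1 - ⌈a⌉ : ℤ) : ℝ) := by
        push_cast
        linarith [Int.sub_one_lt_floor b, Int.ceil_lt_add_one a]
    _ ≤ (((⌊b⌋ + 1 - ⌈a⌉).toNat : ℤ) : ℝ) := by exact_mod_cast Int.self_le_toNat _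

lemma exists_finset_subset_closedBall_inter_lpts (z : EuclideanSpace ℝ (Fin n)) {δ : ℝ}
    (hkδ : 1 ≤ k * δ) :
    ∃ S : Finset (EuclideanSpace ℝ (Fin n)),
      ↑S ⊆ closedBall z (n * δ) ∩ lpts n k ∧ (k * δ) ^ n ≤ S.card := by
  classical
  have hk : k ≠ 0 := by rintro rfl; norm_num at hkδ
  have hk' : (0 : ℝ) < k := by positivity
  let B := Fintype.piFinset fun i => Finset.Icc ⌈k * (z i - δ)⌉ ⌊k * (z i + δ)⌋
  refine ⟨B.image (latticePoint k), ?_, ?_⟩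
  · intro x hx
    obtain ⟨a, ha, rfl⟩ := Finset.mem_image.mp (Finset.mem_coe.mp hx)
    refine ⟨?_, (lpts_eq_range hk).superset ⟨a, rfl⟩⟩
    rw [mem_closedBall, dist_eq_norm]
    refine EuclideanSpace.norm_le_card_mul_of_forall_abs_le fun i => ?_
    have hai := Finset.mem_Icc.mp (Fintype.mem_piFinset.mp ha i)
    have h₁ := Int.ceil_le.mp hai.1
    have h₂ := Int.le_floor.mp hai.2
    rw [PiLp.sub_apply, latticePoint_apply, abs_le]
    constructor
    · rw [le_sub_iff_add_le, le_div_iff₀ hk']; linarith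
    · rw [sub_le_iff_le_add, div_le_iff₀ hk']; linarith
  · rw [Finset.card_image_of_injective _ (latticePoint_injective hk), Fintype.card_piFinset,
      Nat.cast_prod]
    calc (k * δ) ^ n = ∏ _i : Fin n, (k * δ) := by simp
      _ ≤ _ := Finset.prod_le_prod (fun _ _ => by positivity) fun i _ => by
        have := sub_sub_one_le_card_Icc_ceil_floor (k * (z i - δ)) (k * (z i + δ))
        linarith

lemma card_mul_le_ncard_inter_lpts (hn : 0 < n) {T : Set (EuclideanSpace ℝ (Fin n))}
    (hT : Bornology.IsBounded T) {α : Type*} (P : Finset α) (z : α → EuclideanSpace ℝ (Fin n))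
    {ρ : ℝ} (hsep : (P : Set α).Pairwise fun a b => 2 * ρ < dist (z a) (z b))
    (hball : ∀ a ∈ P, closedBall (z a) ρ ⊆ T) (hkρ : n ≤ k * ρ) :
    P.card * (k * ρ / n) ^ n ≤ (T ∩ lpts n k).ncard := by
  classical
  have hn' : (0 : ℝ) < n := by exact_mod_cast hn
  have hkδ : 1 ≤ k * (ρ / n) := by rwa [← mul_div_assoc, le_div_iff₀ hn', one_mul]
  have hk : k ≠ 0 := by rintro rfl; norm_num at hkδ
  choose S hS hcard using fun a => exists_finset_subset_closedBall_inter_lpts (z a) hkδ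
  rw [mul_div_cancel₀ _ hn'.ne'] at hS
  have hdisj : (P : Set α).PairwiseDisjoint S := by
    intro a ha b hb hab
    refine Finset.disjoint_left.mpr fun x hxa hxb => ?_
    have h₁ := mem_closedBall'.mp (hS a hxa).1
    have h₂ := mem_closedBall.mp (hS b hxb).1
    linarith [hsep ha hb hab, dist_triangle (z a) x (z b)]
  have hsub : ↑(P.biUnion S) ⊆ T ∩ lpts n k := by
    intro x hx
    obtain ⟨a, ha, hxa⟩ := Finset.mem_biUnion.mp hx
    exact ⟨hball a ha (hS a hxa).1, (hS a hxa).2⟩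
  calc P.card * (k * ρ / n) ^ n = ∑ _a ∈ P, (k * (ρ / n)) ^ n := by simp [mul_div_assoc]
    _ ≤ ∑ a ∈ P, ((S a).card : ℝ) := Finset.sum_le_sum fun a _ => hcard a
    _ = (P.biUnion S).card := by rw [Finset.card_biUnion hdisj]; push_cast; rfl
    _ ≤ (T ∩ lpts n k).ncard := by
      rw [← Set.ncard_coe_finset]
      exact_mod_cast Set.ncard_le_ncard hsub (finite_inter_lpts hk hT)

end Lattice

section Geometry

variable {E : Type*} [NormedAddCommGroup E] [NormedSpace ℝ E]

lemma LinearIndependent.exists_pos_le_norm_sum_intCast_smul {κ : Type*} [Fintype κ]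
    {v : κ → E} (hv : LinearIndependent ℝ v) :
    ∃ β : ℝ, 0 < β ∧ ∀ a : κ → ℤ, a ≠ 0 → β ≤ ‖∑ j, (a j : ℝ) • v j‖ := by
  obtain ⟨K, hK, hanti⟩ := (Fintype.linearCombination ℝ v).exists_antilipschitzWith
    (LinearMap.ker_eq_bot.mpr (linearIndependent_iff_injective_fintypeLinearCombination.mp hv))
  refine ⟨(K : ℝ)⁻¹, by positivity, fun a ha => ?_⟩
  obtain ⟨j, hj⟩ := Function.ne_iff.mp ha
  rw [inv_le_iff_one_le_mul₀' (by positivity)]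
  calc (1 : ℝ) ≤ ‖(a j : ℝ)‖ := by rw [Real.norm_eq_abs]; exact_mod_cast Int.one_le_abs hj
    _ ≤ ‖fun j => (a j : ℝ)‖ := norm_le_pi_norm (fun j => (a j : ℝ)) j
    _ ≤ K * ‖Fintype.linearCombination ℝ v fun j => (a j : ℝ)‖ := by
      simpa using hanti.le_mul_dist (fun j => (a j : ℝ)) 0
    _ = K * ‖∑ j, (a j : ℝ) • v j‖ := by rw [Fintype.linearCombination_apply]

lemma LinearIndependent.exists_pos_mul_le_dist_sum_smul {κ : Type*} [Fintype κ] {v : κ → E}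
    (hv : LinearIndependent ℝ v) :
    ∃ β : ℝ, 0 < β ∧ ∀ θ : ℝ, 0 ≤ θ → ∀ m m' : κ → ℕ, m ≠ m' →
      θ * β ≤ dist (∑ j, (m j * θ) • v j) (∑ j, (m' j * θ) • v j) := by
  obtain ⟨β, hβ, hβv⟩ := hv.exists_pos_le_norm_sum_intCast_smul
  refine ⟨β, hβ, fun θ hθ m m' hmm' => ?_⟩
  have hne : (fun j => (m j : ℤ) - m' j) ≠ 0 := fun h => hmm' <| funext fun j => by
    simpa [sub_eq_zero] using congrFun h j
  have hdiff : ∑ j, (m j * θ) • v j - ∑ j, (m' j * θ) • v j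
      = θ • ∑ j, (((m j : ℤ) - m' j : ℤ) : ℝ) • v j := by
    simp only [← Finset.sum_sub_distrib, Finset.smul_sum, smul_smul, ← sub_smul]
    push_cast
    exact Finset.sum_congr rfl fun j _ => by rw [mul_sub, mul_comm θ, mul_comm θ]
  rw [dist_eq_norm, hdiff, norm_smul, Real.norm_of_nonneg hθ]
  exact mul_le_mul_of_nonneg_left (hβv _ hne) hθ

lemma Convex.add_sum_smul_mem {κ : Type*} [Fintype κ] {F : Set E} (hF : Convex ℝ F) {x₀ : E}
    (hx₀ : x₀ ∈ F) {v : κ → E} (hv : ∀ j, x₀ + v j ∈ F) {c : κ → ℝ} (hc₀ : ∀ j, 0 ≤ c j)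
    (hc₁ : ∑ j, c j ≤ 1) : x₀ + ∑ j, c j • v j ∈ F := by
  classical
  let w : Option κ → ℝ := fun o => o.elim (1 - ∑ j, c j) c
  let z : Option κ → E := fun o => o.elim x₀ fun j => x₀ + v j
  have h := hF.sum_mem (t := Finset.univ) (w := w) (z := z)
    (fun o _ => by cases o <;> simp [w, hc₀, hc₁]) (by simp [w, Fintype.sum_option])
    (fun o _ => by cases o <;> simp [z, hx₀, hv])
  convert h using 1
  simp only [Fintype.sum_option, w, z, Option.elim, smul_add, Finset.sum_add_distrib,
    ← Finset.sum_smul]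
  module

lemma Convex.closedBall_smul_add_smul_subset {s : Set E} (hs : Convex ℝ s) {x p : E} {r t : ℝ}
    (hx : x ∈ s) (hp : closedBall p r ⊆ s) (ht₀ : 0 < t) (ht₁ : t ≤ 1) :
    closedBall ((1 - t) • x + t • p) (t * r) ⊆ s := by
  intro w hw
  set u := p + t⁻¹ • (w - ((1 - t) • x + t • p))
  have hu : u ∈ closedBall p r := by
    rw [mem_closedBall, dist_eq_norm, add_sub_cancel_left, norm_smul, Real.norm_eq_abs,
      abs_of_pos (inv_pos.mpr ht₀), inv_mul_le_iff₀ ht₀, ← dist_eq_norm]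
    exact hw
  have hw' : (1 - t) • x + t • u = w := by
    simp only [u, smul_add, smul_smul, mul_inv_cancel₀ ht₀.ne', one_smul]
    abel
  exact hw' ▸ hs hx (hp hu) (by linarith) ht₀.le (by ring)

lemma Convex.exists_separated_finset_of_linearIndependent {κ : Type*} [Fintype κ] {F : Set E}
    (hF : Convex ℝ F) {x₀ : E} (hx₀ : x₀ ∈ F) {v : κ → E} (hvF : ∀ j, x₀ + v j ∈ F)
    (hv : LinearIndependent ℝ v) :
    ∃ c : ℝ, 0 < c ∧ ∀ ρ : ℝ, 0 < ρ → ∃ P : Finset E, ↑P ⊆ F ∧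
      (P : Set E).Pairwise (fun x y => ρ ≤ dist x y) ∧ c ≤ P.card * ρ ^ Fintype.card κ := by
  classical
  obtain ⟨β, hβ, hβv⟩ := hv.exists_pos_mul_le_dist_sum_smul
  set ι := Fintype.card κ
  refine ⟨(β / (ι + 1)) ^ ι, by positivity, fun ρ hρ => ?_⟩
  -- The mesh `θ = ρ / β` makes the grid `ρ`-separated, and `m j ≤ a` keeps it inside the
  -- simplex spanned by `x₀` and the `x₀ + v j`.
  set a := β / ((ι + 1) * ρ)
  set M := ⌊a⌋₊ + 1
  set θ := ρ / β
  let X : (κ → ℕ) → E := fun m => x₀ + ∑ j, (m j * θ) • v j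
  have hsep : ∀ m m', m ≠ m' → ρ ≤ dist (X m) (X m') := fun m m' hmm' => by
    have := hβv θ (by positivity) m m' hmm'
    rwa [div_mul_cancel₀ _ hβ.ne', ← dist_add_left x₀] at this
  have hinj : Function.Injective X := fun m m' h => by
    by_contra hmm'
    have := hsep m m' hmm'
    rw [h, dist_self] at this
    linarith
  refine ⟨(Fintype.piFinset fun _ => Finset.range M).image X, ?_, ?_, ?_⟩
  · intro x hx
    obtain ⟨m, hm, rfl⟩ := Finset.mem_image.mp (Finset.mem_coe.mp hx)
    refine hF.add_sum_smul_mem hx₀ hvF (fun j => by positivity) ?_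
    calc ∑ j, (m j : ℝ) * θ ≤ ∑ _j : κ, a * θ := Finset.sum_le_sum fun j _ => by
          have hmj : m j < M := Finset.mem_range.mp (Fintype.mem_piFinset.mp hm j)
          gcongr
          exact (Nat.cast_le.mpr (Nat.le_of_lt_succ hmj)).trans (Nat.floor_le (by positivity))
      _ = ι / (ι + 1) := by
        simp only [a, θ, Finset.sum_const, Finset.card_univ, nsmul_eq_mul]
        field_simp
        rfl
      _ ≤ 1 := div_le_one_of_le₀ (by linarith) (by positivity)
  · intro x hx x' hx' hxx'
    obtain ⟨m, -, rfl⟩ := Finset.mem_image.mp (Finset.mem_coe.mp hx)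
    obtain ⟨m', -, rfl⟩ := Finset.mem_image.mp (Finset.mem_coe.mp hx')
    exact hsep m m' fun h => hxx' (h ▸ rfl)
  · have hM : β / (ι + 1) ≤ M * ρ := by
      calc β / (ι + 1) = a * ρ := by simp only [a]; field_simp
        _ ≤ M * ρ := by gcongr; exact (Nat.lt_floor_add_one a).le.trans (by simp [M])
    rw [Finset.card_image_of_injective _ hinj, Fintype.card_piFinset]
    simp only [Finset.card_range, Finset.prod_const, Finset.card_univ]
    rw [Nat.cast_pow, ← mul_pow]
    gcongr

theorem Convex.exists_separated_finset [FiniteDimensional ℝ E] {F : Set E} (hF : Convex ℝ F)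
    (hne : F.Nonempty) :
    ∃ c : ℝ, 0 < c ∧ ∀ ρ : ℝ, 0 < ρ → ∃ P : Finset E, ↑P ⊆ F ∧
      (P : Set E).Pairwise (fun x y => ρ ≤ dist x y) ∧
      c ≤ P.card * ρ ^ Module.finrank ℝ (affineSpan ℝ F).direction := by
  obtain ⟨x₀, hx₀⟩ := hne
  obtain ⟨b, hbF, hspan, hb⟩ := exists_linearIndependent ℝ ((· -ᵥ x₀) '' F)
  have := hb.setFinite.fintype
  have hdim : Module.finrank ℝ (affineSpan ℝ F).direction = Fintype.card b := by
    rw [direction_affineSpan, vectorSpan_eq_span_vsub_set_right ℝ hx₀, ← hspan,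
      finrank_span_set_eq_card hb, Set.toFinset_card]
  have hbF' : ∀ v : b, x₀ + (v : E) ∈ F := fun v => by
    obtain ⟨y, hy, hyv⟩ := hbF v.2
    rw [← hyv]
    simpa using hy
  rw [hdim]
  exact hF.exists_separated_finset_of_linearIndependent hx₀ hbF' hb

end Geometry

section Slab

lemma mul_pow_sub_le_of_le_mul_pow {c N x : ℝ} {ι n : ℕ} (hx : 0 ≤ x) (hιn : ι ≤ n)
    (h : c ≤ N * x ^ ι) : c * x ^ (n - ι) ≤ N * x ^ n :=
  calc c * x ^ (n - ι) ≤ N * x ^ ι * x ^ (n - ι) := by gcongr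
    _ = N * x ^ n := by rw [mul_assoc, ← pow_add, Nat.add_sub_cancel' hιn]

variable {n k : ℕ}

lemma card_mul_le_ncard_superlevel_inter_lpts (hn : 0 < n) {Δ : Set (EuclideanSpace ℝ (Fin n))}
    (hcv : Convex ℝ Δ) (hb : Bornology.IsBounded Δ) {p : EuclideanSpace ℝ (Fin n)} {r : ℝ}
    (hpr : closedBall p r ⊆ Δ) (i : Fin n) {S₀ s t : ℝ} (ht₀ : 0 < t) (ht : t ≤ 1 / 4)
    (hs : s < (1 - t) * S₀ + t * (p i - r)) {P : Finset (EuclideanSpace ℝ (Fin n))}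
    (hPF : ↑P ⊆ Δ ∩ {x | x i = S₀})
    (hsep : (P : Set (EuclideanSpace ℝ (Fin n))).Pairwise fun x y => 3 * (t * r) ≤ dist x y)
    (hkρ : n ≤ k * (t * r)) :
    P.card * (k * (t * r) / n) ^ n ≤ (Δ ∩ {x | s < x i} ∩ lpts n k).ncard := by
  have hρ : 0 < t * r :=
    pos_of_mul_pos_right ((Nat.cast_pos.mpr hn).trans_le hkρ) k.cast_nonneg
  let z : EuclideanSpace ℝ (Fin n) → EuclideanSpace ℝ (Fin n) := fun x => (1 - t) • x + t • p
  have hdist : ∀ x y, dist (z x) (z y) = (1 - t) * dist x y := fun x y => by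
    rw [dist_eq_norm, dist_eq_norm, ← norm_smul_of_nonneg (by linarith)]
    congr 1
    simp only [z]
    module
  refine card_mul_le_ncard_inter_lpts hn (hb.subset inter_subset_left) P z (fun x hx y hy hxy => ?_)
    (fun x hx w hw => ?_) hkρ
  · calc 2 * (t * r) < 3 / 4 * (3 * (t * r)) := by linarith
      _ ≤ (1 - t) * dist x y :=
        mul_le_mul (by linarith) (hsep hx hy hxy) (by positivity) (by linarith)
      _ = dist (z x) (z y) := (hdist x y).symm
  · refine ⟨hcv.closedBall_smul_add_smul_subset (hPF hx).1 hpr ht₀ (by linarith) hw, ?_⟩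
    have hwz : |w i - z x i| ≤ t * r := by
      rw [← PiLp.sub_apply]
      exact (PiLp.norm_apply_le _ i).trans (mem_closedBall_iff_norm.mp hw)
    have hzx : z x i = (1 - t) * S₀ + t * p i := by
      have hxS : x i = S₀ := (hPF hx).2
      simp [z, hxS]
    show s < w i
    linarith [(abs_le.mp hwz).1]

theorem Convex.exists_lower_bound_ncard_superlevel_inter_lpts (hn : 0 < n)
    {Δ : Set (EuclideanSpace ℝ (Fin n))} (hcv : Convex ℝ Δ) (hb : Bornology.IsBounded Δ)
    {p : EuclideanSpace ℝ (Fin n)} {r : ℝ} (hr : 0 < r) (hpr : closedBall p r ⊆ Δ) (i : Fin n)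
    {σ S₀ : ℝ} (hσ : ∀ x ∈ Δ, σ ≤ x i) (hS₀ : ∀ x ∈ Δ, x i ≤ S₀)
    (hF : (Δ ∩ {x | x i = S₀}).Nonempty) :
    ∃ C : ℝ, 0 < C ∧ ∀ (k : ℕ) (s : ℝ), (σ + S₀) / 2 ≤ s → C ≤ k * (S₀ - s) →
      C⁻¹ * (S₀ - s) ^ (n - Module.finrank ℝ (affineSpan ℝ (Δ ∩ {x | x i = S₀})).direction) *
        (k : ℝ) ^ n ≤ (Δ ∩ {x | s < x i} ∩ lpts n k).ncard := by
  have hpΔ : p ∈ Δ := hpr (mem_closedBall_self hr.le)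
  have hFcv : Convex ℝ (Δ ∩ {x | x i = S₀}) :=
    hcv.inter (convex_hyperplane (EuclideanSpace.proj i).toLinearMap.isLinear S₀)
  obtain ⟨c, hc, hpack⟩ := hFcv.exists_separated_finset hF
  set ι := Module.finrank ℝ (affineSpan ℝ (Δ ∩ {x | x i = S₀})).direction
  have hιn : ι ≤ n := (Submodule.finrank_le _).trans finrank_euclideanSpace_fin.le
  set D := S₀ - σ + r
  have hD : 0 < D := by linarith [hσ p hpΔ, hS₀ p hpΔ]
  set K := c * (3 * r / (2 * D)) ^ (n - ι) / (3 * n) ^ n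
  refine ⟨max (2 * D * n / r) K⁻¹, by positivity, fun k s hs hC => ?_⟩
  have hCn := (le_max_left _ _).trans hC
  have hsS : 0 < S₀ - s :=
    pos_of_mul_pos_right ((show 0 < 2 * D * n / r by positivity).trans_le hCn) k.cast_nonneg
  set t := (S₀ - s) / (2 * D)
  have ht : 0 < t := by positivity
  have ht' : t ≤ 1 / 4 := by rw [div_le_iff₀ (by positivity)]; linarith
  have hkρ : n ≤ k * (t * r) := by
    rw [div_le_iff₀ hr] at hCn
    rw [show k * (t * r) = k * (S₀ - s) * r / (2 * D) by simp only [t]; ring,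
      le_div_iff₀ (by positivity)]
    linarith
  have hslab : s < (1 - t) * S₀ + t * (p i - r) := by
    have htD : t * D = (S₀ - s) / 2 := by simp only [t]; field_simp
    nlinarith [mul_le_mul_of_nonneg_left (hσ p hpΔ) ht.le]
  obtain ⟨P, hPF, hPsep, hPcard⟩ := hpack (3 * (t * r)) (by positivity)
  calc (max (2 * D * n / r) K⁻¹)⁻¹ * (S₀ - s) ^ (n - ι) * k ^ n
      ≤ K * (S₀ - s) ^ (n - ι) * k ^ n := by
        gcongr
        exact inv_le_of_inv_le₀ (by positivity) (le_max_right _ _)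
    _ = c * (3 * (t * r)) ^ (n - ι) * (k / (3 * n)) ^ n := by
      simp only [K, t, div_pow, mul_pow]
      field_simp
    _ ≤ P.card * (3 * (t * r)) ^ n * (k / (3 * n)) ^ n := by
      gcongr ?_ * _
      exact mul_pow_sub_le_of_le_mul_pow (by positivity) hιn hPcard
    _ = P.card * (k * (t * r) / n) ^ n := by
      rw [mul_assoc, ← mul_pow]
      congr 2
      field_simp
    _ ≤ _ := card_mul_le_ncard_superlevel_inter_lpts hn hcv hb hpr i ht ht' hslab hPF hPsep hkρ

end Slab

theorem stmt12_general (n : ℕ) (hn : 0 < n) (Δ : Set (EuclideanSpace ℝ (Fin n)))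
    (hcp : IsCompact Δ) (hcv : Convex ℝ Δ)
    (hint : (interior Δ).Nonempty)
    (σ S₀ : ℝ)
    (hσ : σ = sInf ((fun x : EuclideanSpace ℝ (Fin n) => x ⟨0, hn⟩) '' Δ))
    (hS₀ : S₀ = sSup ((fun x : EuclideanSpace ℝ (Fin n) => x ⟨0, hn⟩) '' Δ))
    (ι : ℕ)
    (hι : ι = Module.finrank ℝ
        (affineSpan ℝ (Δ ∩ {x : EuclideanSpace ℝ (Fin n) | x ⟨0, hn⟩ = S₀})).direction) :
    ∃ C : ℝ, 0 < C ∧ ∀ k : ℕ, 1 ≤ k → ∀ s : ℝ, (σ + S₀) / 2 ≤ s → s ≤ S₀ →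
      C ≤ (k : ℝ) * (S₀ - s) →
      C⁻¹ * (S₀ - s) ^ (n - ι) * (k : ℝ) ^ n
        ≤ ((Δ ∩ {x : EuclideanSpace ℝ (Fin n) | s < x ⟨0, hn⟩} ∩ lpts n k).ncard : ℝ) := by
  set e₀ : Fin n := ⟨0, hn⟩
  have himage : IsCompact ((fun x : EuclideanSpace ℝ (Fin n) => x e₀) '' Δ) :=
    hcp.image (EuclideanSpace.proj e₀).continuous
  obtain ⟨p, hp⟩ := hint
  obtain ⟨r, hr, hpr⟩ := nhds_basis_closedBall.mem_iff.mp (mem_interior_iff_mem_nhds.mp hp)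
  have hF : (Δ ∩ {x | x e₀ = S₀}).Nonempty := by
    obtain ⟨x, hx, hxS⟩ := hS₀ ▸ himage.sSup_mem ⟨_, p, interior_subset hp, rfl⟩
    exact ⟨x, hx, hxS⟩
  obtain ⟨C, hC, hcount⟩ := hcv.exists_lower_bound_ncard_superlevel_inter_lpts hn
    hcp.isBounded hr hpr e₀ (fun x hx => hσ ▸ csInf_le himage.bddBelow ⟨x, hx, rfl⟩)
    (fun x hx => hS₀ ▸ le_csSup himage.bddAbove ⟨x, hx, rfl⟩) hF
  exact ⟨C, hC, fun k _ s hs _ hks => hι ▸ hcount k s hs hks⟩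

theorem stmt12 (n : ℕ) (hn : 0 < n) (Δ : Set (EuclideanSpace ℝ (Fin n)))
    (hne : Δ.Nonempty) (hcp : IsCompact Δ) (hcv : Convex ℝ Δ)
    (hint : (interior Δ).Nonempty)
    (σ S₀ : ℝ)
    (hσ : σ = sInf ((fun x : EuclideanSpace ℝ (Fin n) => x ⟨0, hn⟩) '' Δ))
    (hS₀ : S₀ = sSup ((fun x : EuclideanSpace ℝ (Fin n) => x ⟨0, hn⟩) '' Δ))
    (ι : ℕ)
    (hι : ι = Module.finrank ℝ
        (affineSpan ℝ (Δ ∩ {x : EuclideanSpace ℝ (Fin n) | x ⟨0, hn⟩ = S₀})).direction) :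
    ∃ C : ℝ, 0 < C ∧ ∀ k : ℕ, 1 ≤ k → ∀ s : ℝ, (σ + S₀) / 2 ≤ s → s ≤ S₀ →
      C ≤ (k : ℝ) * (S₀ - s) →
      C⁻¹ * (S₀ - s) ^ (n - ι) * (k : ℝ) ^ n
        ≤ ((Δ ∩ {x : EuclideanSpace ℝ (Fin n) | s < x ⟨0, hn⟩} ∩ lpts n k).ncard : ℝ) :=
  stmt12_general n hn Δ hcp hcv hint σ S₀ hσ hS₀ ι hι
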